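/- Let C₁ ⊆ F^{I₁} and C₂ ⊆ F^{I₂} be linear codes on finite index sets I₁, I₂. Define C₁ ⋆ C₂ ⊆ F^{I₁ ∪ I₂} as the set of vectors x ⋆ y for x ∈ C₁, y ∈ C₂, where (x⋆y)_i = x_i for i ∈ I₁∖I₂, (x⋆y)_i = y_i for i ∈ I₂∖I₁, and (x⋆y)_i = x_i − y_i for i ∈ I₁ ∩ I₂. Then dim(C₁ ⋆ C₂) = dim(C₁) + dim(C₂) − dim(C₁^{(s)} ∩ C₂^{(s)}), where C_i^{(s)} is the cross-section of C_i on I₁ ∩ I₂. -/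
import Mathlib


open Module

/-- The submodule of functions in `α → F` vanishing on `s`. -/
def vanishOn (F : Type*) [Field F] {α : Type*} (s : Set α) : Submodule F (α → F) where
  carrier := {x | ∀ a ∈ s, x a = 0}
  add_mem' := by
    intro x y hx hy a ha
    show x a + y a = 0
    rw [hx a ha, hy a ha, add_zero]
  zero_mem' := fun a _ => rfl
  smul_mem' := by
    intro c x hx a ha
    show c • x a = 0
    rw [hx a ha, smul_zero]

variable (F : Type*) [Field F] (J K Jb : Type*)

/-- The `⋆` operation: indices of the first code are `J ⊕ K`, of the second `K ⊕ Jb`,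
where `K` plays the role of the common index set `I₁ ∩ I₂`.  On `J` the result agrees with
`x`, on `Jb` with `y`, and on the common part `K` it is `x − y`. -/
noncomputable def starMap :
    ((J ⊕ K → F) × (K ⊕ Jb → F)) →ₗ[F] (J ⊕ K ⊕ Jb → F) where
  toFun p := Sum.elim (fun j => p.1 (Sum.inl j))
    (Sum.elim (fun k => p.1 (Sum.inr k) - p.2 (Sum.inl k)) (fun j => p.2 (Sum.inr j)))
  map_add' p q := by
    funext i
    rcases i with j | k | j <;> simp <;> ring
  map_smul' c p := by
    funext i
    rcases i with j | k | j <;> simp <;> ring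

variable {F J K Jb}

/-- The code `C₁ ⋆ C₂ = {x ⋆ y : x ∈ C₁, y ∈ C₂}`. -/
noncomputable def starCode (C₁ : Submodule F (J ⊕ K → F)) (C₂ : Submodule F (K ⊕ Jb → F)) :
    Submodule F (J ⊕ K ⊕ Jb → F) :=
  (C₁.prod C₂).map (starMap F J K Jb)

/-- The projection `C₁^{(p)} = C₁|_{I₁ ∩ I₂}` of the first code onto the common part `K`. -/
noncomputable def projK₁ (C₁ : Submodule F (J ⊕ K → F)) : Submodule F (K → F) :=
  C₁.map (LinearMap.funLeft F F (Sum.inr : K → J ⊕ K))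

/-- The projection `C₂^{(p)} = C₂|_{I₁ ∩ I₂}` of the second code onto the common part `K`. -/
noncomputable def projK₂ (C₂ : Submodule F (K ⊕ Jb → F)) : Submodule F (K → F) :=
  C₂.map (LinearMap.funLeft F F (Sum.inl : K → K ⊕ Jb))

/-- The cross-section `C₁^{(s)} = (C₁)_{I₁ ∩ I₂}` on the common part `K`. -/
noncomputable def crossK₁ (C₁ : Submodule F (J ⊕ K → F)) : Submodule F (K → F) :=
  (C₁ ⊓ vanishOn F (Set.range (Sum.inl : J → J ⊕ K))).map
    (LinearMap.funLeft F F (Sum.inr : K → J ⊕ K))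

/-- The cross-section `C₂^{(s)} = (C₂)_{I₁ ∩ I₂}` on the common part `K`. -/
noncomputable def crossK₂ (C₂ : Submodule F (K ⊕ Jb → F)) : Submodule F (K → F) :=
  (C₂ ⊓ vanishOn F (Set.range (Sum.inr : Jb → K ⊕ Jb))).map
    (LinearMap.funLeft F F (Sum.inl : K → K ⊕ Jb))

/-- `S(C₁, C₂)`: the cross-section of `C₁ ⋆ C₂` on the symmetric difference
`I₁ Δ I₂ = J ⊕ Jb`. -/
noncomputable def sCode (C₁ : Submodule F (J ⊕ K → F)) (C₂ : Submodule F (K ⊕ Jb → F)) :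
    Submodule F (J ⊕ Jb → F) :=
  (starCode C₁ C₂ ⊓ vanishOn F (Set.range (fun k : K => (Sum.inr (Sum.inl k) : J ⊕ K ⊕ Jb)))).map
    (LinearMap.funLeft F F (Sum.elim Sum.inl (Sum.inr ∘ Sum.inr) : J ⊕ Jb → J ⊕ K ⊕ Jb))


section Aux

variable {M N : Type*} [AddCommGroup M] [Module F M] [AddCommGroup N] [Module F N]

/-- A submodule product is linearly equivalent to the product of the submodules. -/
noncomputable def prodSubEquiv (p : Submodule F M) (q : Submodule F N) :
    ↥(p.prod q) ≃ₗ[F] ↥p × ↥q where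
  toFun v := (⟨v.1.1, v.2.1⟩, ⟨v.1.2, v.2.2⟩)
  invFun v := ⟨(v.1.1, v.2.1), ⟨v.1.2, v.2.2⟩⟩
  left_inv v := rfl
  right_inv v := rfl
  map_add' v w := rfl
  map_smul' c v := rfl

end Aux

lemma starMap_ker_iff (x : J ⊕ K → F) (y : K ⊕ Jb → F) :
    starMap F J K Jb (x, y) = 0 ↔
      (∀ j, x (Sum.inl j) = 0) ∧ (∀ k, x (Sum.inr k) = y (Sum.inl k)) ∧
      (∀ j, y (Sum.inr j) = 0) := by
  constructor
  · intro h
    refine ⟨fun j => congrFun h (Sum.inl j), fun k => ?_, fun j => congrFun h (Sum.inr (Sum.inr j))⟩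
    have := congrFun h (Sum.inr (Sum.inl k))
    simpa [starMap, sub_eq_zero] using this
  · rintro ⟨h1, h2, h3⟩
    funext i
    rcases i with j | k | j <;> simp [starMap, sub_eq_zero, h1, h2, h3]

set_option synthInstance.maxHeartbeats 1000000 in
set_option maxHeartbeats 1000000 in
/-- `dim (C₁ ⋆ C₂) = dim C₁ + dim C₂ − dim (C₁^{(s)} ∩ C₂^{(s)})`. -/
theorem starCode_finrank [Fintype J] [Fintype K] [Fintype Jb]
    (C₁ : Submodule F (J ⊕ K → F)) (C₂ : Submodule F (K ⊕ Jb → F)) :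
    finrank F ↥(starCode C₁ C₂) =
      finrank F ↥C₁ + finrank F ↥C₂ - finrank F ↥(crossK₁ C₁ ⊓ crossK₂ C₂) := by
  classical
  set p := C₁.prod C₂ with hp
  set f := (starMap F J K Jb).domRestrict p with hf
  have hr : LinearMap.range f = starCode C₁ C₂ := LinearMap.range_domRestrict p _
  -- linear equivalence between ker f and the intersection of cross-sections
  let g : ↥(LinearMap.ker f) →ₗ[F] ↥(crossK₁ C₁ ⊓ crossK₂ C₂) :=
    { toFun := fun v => ⟨fun k => (v.1 : (J ⊕ K → F) × (K ⊕ Jb → F)).1 (Sum.inr k), by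
        obtain ⟨⟨⟨x, y⟩, hxy⟩, hker⟩ := v
        have hker' : starMap F J K Jb (x, y) = 0 := hker
        rw [starMap_ker_iff] at hker'
        obtain ⟨h1, h2, h3⟩ := hker'
        obtain ⟨hx, hy⟩ := (Submodule.mem_prod).mp hxy
        constructor
        · exact ⟨x, ⟨hx, by rintro a ⟨j, rfl⟩; exact h1 j⟩, rfl⟩
        · exact ⟨y, ⟨hy, by rintro a ⟨j, rfl⟩; exact h3 j⟩, by funext k; exact (h2 k).symm⟩⟩
      map_add' := fun v w => rfl
      map_smul' := fun c v => rfl }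
  have hg : Function.Bijective g := by
    constructor
    · intro v w hvw
      obtain ⟨⟨⟨x, y⟩, hxy⟩, hker⟩ := v
      obtain ⟨⟨⟨x', y'⟩, hxy'⟩, hker'⟩ := w
      have hk1 : starMap F J K Jb (x, y) = 0 := hker
      have hk2 : starMap F J K Jb (x', y') = 0 := hker'
      rw [starMap_ker_iff] at hk1 hk2
      have hK : ∀ k, x (Sum.inr k) = x' (Sum.inr k) := fun k =>
        congrFun (congrArg Subtype.val hvw) k
      refine Subtype.ext (Subtype.ext ?_)
      have hx : x = x' := by
        funext i; rcases i with j | k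
        · rw [hk1.1 j, hk2.1 j]
        · exact hK k
      have hy : y = y' := by
        funext i; rcases i with k | j
        · rw [← hk1.2.1 k, ← hk2.2.1 k, hx]
        · rw [hk1.2.2 j, hk2.2.2 j]
      exact Prod.ext hx hy
    · rintro ⟨z, hz1, hz2⟩
      obtain ⟨x, ⟨hx1, hx0⟩, hxz⟩ := hz1
      obtain ⟨y, ⟨hy1, hy0⟩, hyz⟩ := hz2
      have hxz' : ∀ k, x (Sum.inr k) = z k := fun k => congrFun hxz k
      have hyz' : ∀ k, y (Sum.inl k) = z k := fun k => congrFun hyz k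
      have hmem : (x, y) ∈ p := Submodule.mem_prod.mpr ⟨hx1, hy1⟩
      have hker : starMap F J K Jb (x, y) = 0 := by
        rw [starMap_ker_iff]
        exact ⟨fun j => hx0 _ ⟨j, rfl⟩, fun k => by rw [hxz' k, hyz' k],
          fun j => hy0 _ ⟨j, rfl⟩⟩
      refine ⟨⟨⟨(x, y), hmem⟩, hker⟩, ?_⟩
      exact Subtype.ext (funext fun k => hxz' k)
  have hkeq : finrank F ↥(LinearMap.ker f) = finrank F ↥(crossK₁ C₁ ⊓ crossK₂ C₂) :=
    (LinearEquiv.ofBijective g hg).finrank_eq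
  have hrank := LinearMap.finrank_range_add_finrank_ker f
  rw [hr, hkeq] at hrank
  have hprod : finrank F ↥p = finrank F ↥C₁ + finrank F ↥C₂ := by
    rw [(prodSubEquiv C₁ C₂).finrank_eq, Module.finrank_prod]
  omega
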